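/- arXiv:2403.08751 — 5 statements merged into one kernel-verified Lean document; each statement's English description precedes it below -/
import Mathlib

section
/- For every integer k ≥ 2, 2^{d−1} < Φ_k(2) < 2^{d+1}, where d = deg(Φ_k) = φ(k). -/
/-!
Möbius inversion of `∏_{d ∣ n} Φ_d(2) = 2^n - 1` together with `∑_{d ∣ n} φ(d) = n` gives
`Φ_n(2) / 2^φ(n) = ∏_{s ∣ n} (1 - 2^{-n/s})^{μ(s)}`. Let `p` be the least prime factor of `n`.
Pairing each squarefree divisor `s` prime to `p` with `p s` (the other divisors have `μ = 0`)
turns the product into `∏_s w(e_s)^{μ(s)}` with `e_s = n/(ps)` pairwise distinct and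
`w(e) = (1 - 2^{-pe}) / (1 - 2^{-e}) ≥ 1`. Any product of `w` over distinct exponents is `< 2`:
the numerators are `≤ 1` and `∏ (1 - 2^{-e}) ≥ 1 - ∑ 2^{-e} > 1/2`, except when `e = 1` occurs;
then `n = p s` with `s` squarefree, every other `e_s` divides `s`, hence exceeds `p`, and
`w(1) = 2 (1 - 2^{-p})` is compensated by `∏_{e > p} (1 - 2^{-e}) > 1 - 2^{-p}`. Splitting by the
sign of `μ` gives a quotient of two numbers in `[1, 2)`, which lies in `(1/2, 2)`.
-/

open Polynomial Finset ArithmeticFunction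
open scoped ArithmeticFunction.Moebius

theorem cyclotomic_eval_div_pow_totient_eq_prod {K : Type*} [Field K] {x : K} (hx₀ : x ≠ 0)
    (hx : ∀ i, 0 < i → x ^ i ≠ 1) {n : ℕ} (hn : 0 < n) :
    (cyclotomic n K).eval x / x ^ n.totient = ∏ s ∈ n.divisors, (1 - x⁻¹ ^ (n / s)) ^ μ s := by
  have hsub : ∀ i, 0 < i → 1 - x⁻¹ ^ i ≠ 0 := fun i hi h =>
    hx i hi (by rwa [sub_eq_zero, inv_pow, eq_comm, inv_eq_one] at h)
  have hcyc : ∀ i, 0 < i → (cyclotomic i K).eval x ≠ 0 := fun i hi h =>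
    hx i hi (by simpa [sub_eq_zero, h] using
      (eval_dvd (p := cyclotomic i K) (x := x) (cyclotomic.dvd_X_pow_sub_one i K)))
  have hprod : ∀ i > 0, ∏ d ∈ i.divisors, (cyclotomic d K).eval x / x ^ d.totient
      = 1 - x⁻¹ ^ i := by
    intro i hi
    rw [prod_div_distrib, ← eval_prod, prod_cyclotomic_eq_X_pow_sub_one hi, prod_pow_eq_pow_sum,
      Nat.sum_totient]
    simp only [eval_sub, eval_pow, eval_X, eval_one, inv_pow]
    field_simp [pow_ne_zero i hx₀]
  rw [← (prod_eq_iff_prod_pow_moebius_eq_of_nonzero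
    (fun i hi => div_ne_zero (hcyc i hi) (pow_ne_zero _ hx₀)) hsub).mp hprod n hn,
    Nat.prod_divisorsAntidiagonal (fun i j => (1 - x⁻¹ ^ j) ^ μ i)]

theorem Nat.prod_divisors_eq_prod_mul_prime_mul {M : Type*} [CommMonoid M] {n p : ℕ}
    (hn : n ≠ 0) (hp : p.Prime) (hpn : p ∣ n) (f : ℕ → M) (hf : ∀ s, ¬Squarefree s → f s = 1) :
    ∏ s ∈ n.divisors, f s = ∏ s ∈ n.divisors with Squarefree s ∧ ¬p ∣ s, f s * f (p * s) := by
  have himage : {s ∈ n.divisors | Squarefree s ∧ p ∣ s}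
      = {s ∈ n.divisors | Squarefree s ∧ ¬p ∣ s}.image (p * ·) := by
    ext t
    simp only [mem_image, mem_filter, Nat.mem_divisors]
    constructor
    · rintro ⟨⟨htn, -⟩, hsq, s, rfl⟩
      refine ⟨s, ⟨⟨dvd_of_mul_left_dvd htn, hn⟩, hsq.of_mul_right, fun hps => ?_⟩, rfl⟩
      exact hp.one_lt.ne' (Nat.isUnit_iff.mp (hsq p (mul_dvd_mul_left p hps)))
    · rintro ⟨s, ⟨⟨hsn, -⟩, hsq, hps⟩, rfl⟩
      have hcop : p.Coprime s := (hp.coprime_iff_not_dvd).mpr hps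
      exact ⟨⟨hcop.mul_dvd_of_dvd_of_dvd hpn hsn, hn⟩,
        (Nat.squarefree_mul hcop).mpr ⟨hp.squarefree, hsq⟩, dvd_mul_right p s⟩
  rw [prod_mul_distrib, ← prod_image (fun x _ y _ h => Nat.eq_of_mul_eq_mul_left hp.pos h),
    ← himage, ← filter_filter, ← filter_filter, mul_comm, prod_filter_mul_prod_filter_not]
  exact (prod_subset (filter_subset _ _) fun s _ hs => hf s (by simp_all)).symm

theorem Nat.minFac_lt_of_dvd_of_not_minFac_dvd {n e : ℕ} (he : e ∣ n) (he₁ : e ≠ 1)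
    (hpe : ¬n.minFac ∣ e) : n.minFac < e := by
  have he₀ : e ≠ 0 := by rintro rfl; exact hpe (dvd_zero _)
  have hq := Nat.minFac_prime he₁
  have hle : n.minFac ≤ e.minFac := Nat.minFac_le_of_dvd hq.two_le ((Nat.minFac_dvd e).trans he)
  exact lt_of_le_of_ne (hle.trans (Nat.minFac_le (Nat.pos_of_ne_zero he₀)))
    fun h => hpe (h ▸ dvd_rfl)

theorem Finset.one_sub_sum_le_prod_one_sub {ι R : Type*} [CommRing R] [LinearOrder R]
    [IsStrictOrderedRing R] (s : Finset ι) {f : ι → R} (h0 : ∀ i ∈ s, 0 ≤ f i)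
    (h1 : ∀ i ∈ s, f i ≤ 1) : 1 - ∑ i ∈ s, f i ≤ ∏ i ∈ s, (1 - f i) := by
  induction s using Finset.cons_induction with
  | empty => simp
  | cons a s ha ih =>
    rw [prod_cons, sum_cons]
    have ih := ih (fun i hi => h0 i (mem_cons_of_mem hi)) (fun i hi => h1 i (mem_cons_of_mem hi))
    have hfa0 := h0 a (mem_cons_self a s)
    have hfa1 := h1 a (mem_cons_self a s)
    have hsum : 0 ≤ ∑ i ∈ s, f i := sum_nonneg fun i hi => h0 i (mem_cons_of_mem hi)
    have hprod : 0 ≤ ∏ i ∈ s, (1 - f i) :=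
      prod_nonneg fun i hi => sub_nonneg.mpr (h1 i (mem_cons_of_mem hi))
    nlinarith

theorem Finset.prod_zpow_mem_Ioo_of_prod_lt_two {ι K : Type*} [Field K] [LinearOrder K]
    [IsStrictOrderedRing K] {A : Finset ι} {w : ι → K} {ε : ι → ℤ}
    (hε : ∀ i ∈ A, ε i = 1 ∨ ε i = -1) (hw : ∀ i ∈ A, 1 ≤ w i)
    (hlt : ∀ B ⊆ A, ∏ i ∈ B, w i < 2) :
    ∏ i ∈ A, w i ^ ε i ∈ Set.Ioo 2⁻¹ 2 := by
  have hge : ∀ B ⊆ A, 1 ≤ ∏ i ∈ B, w i := fun B hB => one_le_prod fun i hi => hw i (hB hi)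
  have hpos : {i ∈ A | ε i = 1}.prod (fun i => w i ^ ε i) = ∏ i ∈ A with ε i = 1, w i :=
    prod_congr rfl fun i hi => by rw [(mem_filter.mp hi).2, zpow_one]
  have hneg : {i ∈ A | ¬ε i = 1}.prod (fun i => w i ^ ε i) = (∏ i ∈ A with ¬ε i = 1, w i)⁻¹ := by
    rw [← prod_inv_distrib]
    refine prod_congr rfl fun i hi => ?_
    obtain ⟨hiA, hi1⟩ := mem_filter.mp hi
    rw [(hε i hiA).resolve_left hi1, zpow_neg_one]
  rw [← prod_filter_mul_prod_filter_not A (ε · = 1), hpos, hneg]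
  set Q₁ := ∏ i ∈ A with ε i = 1, w i
  set Q₂ := ∏ i ∈ A with ¬ε i = 1, w i
  have h₁ := hge _ (filter_subset (fun i => ε i = 1) A)
  have h₂ := hge _ (filter_subset (fun i => ¬ε i = 1) A)
  have h₁' := hlt _ (filter_subset (fun i => ε i = 1) A)
  have h₂' := hlt _ (filter_subset (fun i => ¬ε i = 1) A)
  constructor
  · calc 2⁻¹ < Q₂⁻¹ := inv_strictAnti₀ (zero_lt_one.trans_le h₂) h₂'
      _ ≤ Q₁ * Q₂⁻¹ := le_mul_of_one_le_left (by positivity) h₁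
  · calc Q₁ * Q₂⁻¹ ≤ Q₁ := mul_le_of_le_one_right (by positivity) (inv_le_one_of_one_le₀ h₂)
      _ < 2 := h₁'

theorem sum_inv_two_pow_lt {E : Finset ℕ} {k : ℕ} (hE : ∀ e ∈ E, k < e) :
    ∑ e ∈ E, (2⁻¹ : ℚ) ^ e < 2⁻¹ ^ k := by
  set N := E.sup id + k + 1
  have hsub : E ⊆ Ico (k + 1) N := fun e he =>
    mem_Ico.mpr ⟨hE e he, by have : e ≤ E.sup id := le_sup (f := id) he; omega⟩
  have hkN : k + 1 ≤ N := by omega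
  calc ∑ e ∈ E, (2⁻¹ : ℚ) ^ e ≤ ∑ e ∈ Ico (k + 1) N, (2⁻¹ : ℚ) ^ e :=
        sum_le_sum_of_subset_of_nonneg hsub fun _ _ _ => by positivity
    _ = 2⁻¹ ^ k - 2 * 2⁻¹ ^ N := by rw [geom_sum_Ico' (by norm_num) hkN]; ring
    _ < 2⁻¹ ^ k := by linarith [pow_pos (by norm_num : (0 : ℚ) < 2⁻¹) N]

noncomputable def pairFactor (p e : ℕ) : ℚ := (1 - 2⁻¹ ^ (p * e)) / (1 - 2⁻¹ ^ e)

theorem one_sub_inv_two_pow_pos {e : ℕ} (he : e ≠ 0) : 0 < 1 - (2⁻¹ : ℚ) ^ e :=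
  sub_pos.mpr (pow_lt_one₀ (by norm_num) (by norm_num) he)

theorem one_le_pairFactor {p e : ℕ} (hp : p ≠ 0) (he : e ≠ 0) : 1 ≤ pairFactor p e := by
  rw [pairFactor, one_le_div (one_sub_inv_two_pow_pos he)]
  exact sub_le_sub_left (pow_le_pow_of_le_one (by norm_num) (by norm_num)
    (Nat.le_mul_of_pos_left e (Nat.pos_of_ne_zero hp))) 1

theorem prod_pairFactor_lt {p k : ℕ} (hk : k ≠ 0) {E : Finset ℕ} (hE : ∀ e ∈ E, k < e) :
    ∏ e ∈ E, pairFactor p e < (1 - 2⁻¹ ^ k)⁻¹ := by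
  have hnum : ∏ e ∈ E, (1 - (2⁻¹ : ℚ) ^ (p * e)) ≤ 1 :=
    prod_le_one (fun e _ => sub_nonneg.mpr (pow_le_one₀ (by norm_num) (by norm_num)))
      fun e _ => sub_le_self _ (by positivity)
  have hden : 1 - 2⁻¹ ^ k < ∏ e ∈ E, (1 - (2⁻¹ : ℚ) ^ e) :=
    calc 1 - 2⁻¹ ^ k < 1 - ∑ e ∈ E, (2⁻¹ : ℚ) ^ e := sub_lt_sub_left (sum_inv_two_pow_lt hE) 1
      _ ≤ ∏ e ∈ E, (1 - (2⁻¹ : ℚ) ^ e) :=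
        E.one_sub_sum_le_prod_one_sub (fun _ _ => by positivity)
          fun _ _ => pow_le_one₀ (by norm_num) (by norm_num)
  have hk₀ : 0 < 1 - (2⁻¹ : ℚ) ^ k := one_sub_inv_two_pow_pos hk
  calc ∏ e ∈ E, pairFactor p e
      = (∏ e ∈ E, (1 - (2⁻¹ : ℚ) ^ (p * e))) / ∏ e ∈ E, (1 - (2⁻¹ : ℚ) ^ e) := prod_div_distrib ..
    _ ≤ 1 / ∏ e ∈ E, (1 - (2⁻¹ : ℚ) ^ e) := by gcongr; exact (hk₀.trans hden).le
    _ < (1 - 2⁻¹ ^ k)⁻¹ := by rw [one_div]; exact inv_strictAnti₀ hk₀ hden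

theorem prod_pairFactor_lt_two {p : ℕ} (hp : p ≠ 0) {E : Finset ℕ} (hE₀ : 0 ∉ E)
    (hE₁ : 1 ∈ E → ∀ e ∈ E, e ≠ 1 → p < e) : ∏ e ∈ E, pairFactor p e < 2 := by
  by_cases h1 : 1 ∈ E
  · have hp₀ := one_sub_inv_two_pow_pos hp
    have hrest := prod_pairFactor_lt (p := p) hp fun e he =>
      hE₁ h1 e (mem_of_mem_erase he) (ne_of_mem_erase he)
    rw [← insert_erase h1, prod_insert (notMem_erase 1 E)]
    calc pairFactor p 1 * ∏ e ∈ E.erase 1, pairFactor p e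
        < pairFactor p 1 * (1 - 2⁻¹ ^ p)⁻¹ := by
          gcongr
          exact zero_lt_one.trans_le (one_le_pairFactor hp one_ne_zero)
      _ = 2 := by rw [pairFactor, mul_one, div_mul_eq_mul_div, mul_inv_cancel₀ hp₀.ne']; norm_num
  · have := prod_pairFactor_lt (p := p) one_ne_zero fun e he => by
      have : e ≠ 0 := fun h => hE₀ (h ▸ he)
      have : e ≠ 1 := fun h => h1 (h ▸ he)
      omega
    norm_num at this
    exact this

theorem cyclotomic_eval_two_div_pow_totient_eq_prod_pairFactor {n p : ℕ} (hn : n ≠ 0)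
    (hp : p.Prime) (hpn : p ∣ n) :
    (cyclotomic n ℚ).eval 2 / 2 ^ n.totient =
      ∏ s ∈ n.divisors with Squarefree s ∧ ¬p ∣ s, pairFactor p (n / (p * s)) ^ μ s := by
  rw [cyclotomic_eval_div_pow_totient_eq_prod two_ne_zero
      (fun i hi => (one_lt_pow₀ one_lt_two hi.ne').ne') (Nat.pos_of_ne_zero hn),
    Nat.prod_divisors_eq_prod_mul_prime_mul hn hp hpn _
      (fun s hs => by rw [moebius_eq_zero_of_not_squarefree hs, zpow_zero])]
  refine prod_congr rfl fun s hs => ?_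
  obtain ⟨⟨hsn, -⟩, -, hps⟩ := by simpa only [mem_filter, Nat.mem_divisors] using hs
  have hcop : p.Coprime s := hp.coprime_iff_not_dvd.mpr hps
  have hns : n / s = p * (n / (p * s)) := by
    rw [← Nat.mul_div_assoc p (hcop.mul_dvd_of_dvd_of_dvd hpn hsn),
      Nat.mul_div_mul_left _ _ hp.pos]
  rw [hns, isMultiplicative_moebius.map_mul_of_coprime hcop, moebius_apply_prime hp, neg_one_mul,
    zpow_neg, ← div_eq_mul_inv, ← div_zpow, pairFactor]

theorem cyclotomic_eval_two_div_pow_totient_mem_Ioo {n : ℕ} (hn : 2 ≤ n) :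
    (cyclotomic n ℚ).eval 2 / 2 ^ n.totient ∈ Set.Ioo 2⁻¹ 2 := by
  have hn₀ : n ≠ 0 := by omega
  set p := n.minFac
  have hp : p.Prime := Nat.minFac_prime (by omega)
  rw [cyclotomic_eval_two_div_pow_totient_eq_prod_pairFactor hn₀ hp n.minFac_dvd]
  set A := {s ∈ n.divisors | Squarefree s ∧ ¬p ∣ s}
  set e : ℕ → ℕ := fun s => n / (p * s)
  have hA : ∀ s ∈ A, Squarefree s ∧ ¬p ∣ s ∧ n = p * s * e s := by
    intro s hs
    obtain ⟨⟨hsn, -⟩, hsq, hps⟩ := by simpa only [A, mem_filter, Nat.mem_divisors] using hs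
    have hcop : p.Coprime s := hp.coprime_iff_not_dvd.mpr hps
    exact ⟨hsq, hps, (Nat.mul_div_cancel' (hcop.mul_dvd_of_dvd_of_dvd n.minFac_dvd hsn)).symm⟩
  have he₀ : ∀ s ∈ A, e s ≠ 0 := fun s hs he => hn₀ (by rw [(hA s hs).2.2, he, mul_zero])
  refine prod_zpow_mem_Ioo_of_prod_lt_two
    (fun s hs => moebius_ne_zero_iff_eq_or.mp (moebius_ne_zero_iff_squarefree.mpr (hA s hs).1))
    (fun s hs => one_le_pairFactor hp.ne_zero (he₀ s hs)) fun B hB => ?_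
  have he_inj : Set.InjOn e B := fun x hx y hy hxy => by
    have h := (hA x (hB hx)).2.2.symm.trans (hA y (hB hy)).2.2
    rw [hxy, Nat.mul_left_inj (he₀ y (hB hy))] at h
    exact Nat.eq_of_mul_eq_mul_left hp.pos h
  rw [← prod_image he_inj]
  refine prod_pairFactor_lt_two hp.ne_zero (fun h => ?_) fun h₁ t ht ht₁ => ?_
  · obtain ⟨s, hs, hes⟩ := mem_image.mp h
    exact he₀ s (hB hs) hes
  · obtain ⟨s₁, hs₁, hes₁⟩ := mem_image.mp h₁
    obtain ⟨s, hs, rfl⟩ := mem_image.mp ht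
    obtain ⟨-, hps₁, hn₁⟩ := hA s₁ (hB hs₁)
    obtain ⟨-, -, hn⟩ := hA s (hB hs)
    rw [hes₁, mul_one] at hn₁
    -- `n = p * s₁` with `p ∤ s₁`, and `e s ∣ s₁`, so the prime factors of `e s` exceed `p`
    have hdvd : e s ∣ s₁ := ⟨s, Nat.eq_of_mul_eq_mul_left hp.pos (by rw [← hn₁, hn]; ring)⟩
    exact Nat.minFac_lt_of_dvd_of_not_minFac_dvd (hdvd.trans ⟨p, by rw [hn₁, mul_comm]⟩) ht₁
      fun hpe => hps₁ (hpe.trans hdvd)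

/-- For every `k ≥ 2`, `2^{d−1} < Φ_k(2) < 2^{d+1}` where `d = deg Φ_k = φ(k)`. -/
theorem stmt4 (k : ℕ) (hk : 2 ≤ k) :
    (2 : ℤ) ^ (k.totient - 1) < (Polynomial.cyclotomic k ℤ).eval 2 ∧
      (Polynomial.cyclotomic k ℤ).eval 2 < 2 ^ (k.totient + 1) := by
  obtain ⟨hlo, hhi⟩ := cyclotomic_eval_two_div_pow_totient_mem_Ioo hk
  have hcast : (cyclotomic k ℚ).eval 2 = (((cyclotomic k ℤ).eval 2 : ℤ) : ℚ) := by
    simpa using cyclotomic.eval_apply (2 : ℤ) k (Int.castRingHom ℚ)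
  have hφ : 0 < k.totient := Nat.totient_pos.mpr (by omega)
  have hpow : (2 : ℚ) ^ k.totient = 2 * 2 ^ (k.totient - 1) := by
    rw [← pow_succ', Nat.sub_add_cancel hφ]
  rw [hcast, lt_div_iff₀ (by positivity)] at hlo
  rw [hcast, div_lt_iff₀ (by positivity)] at hhi
  have key : (2 : ℚ) ^ (k.totient - 1) < (((cyclotomic k ℤ).eval 2 : ℤ) : ℚ) ∧
      (((cyclotomic k ℤ).eval 2 : ℤ) : ℚ) < 2 ^ (k.totient + 1) :=
    ⟨by linarith, by rw [pow_succ]; linarith⟩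
  exact_mod_cast key
end

section
/- Let k be a positive integer with k ≠ 1 and k ≠ 6, and suppose r is a positive integer such that Φ_k(2) divides 2^r − 1. Then k divides r. -/
/-!
Bang's theorem in cyclotomic form: for `k > 1`, `k ≠ 6`, the number `Φ_k(2)` has a prime
factor `p ∤ k`. For such `p`, `2` is a primitive `k`-th root of unity modulo `p`, so
`p ∣ 2 ^ r - 1` forces `k ∣ r`.

Suppose instead that every prime `p ∣ Φ_k(2)` divides `k`. Writing `k = p ^ a * b` with
`p ∤ b`, reduction modulo `p` makes `2` a primitive `b`-th root of unity, so `1 < b ∣ p - 1`: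
`p` is odd and is the largest prime factor of `k`. Hence `Φ_k(2)` is a power of `p`, and in fact
equal to `p`, because it divides `1 + z + ⋯ + z ^ (p - 1)` with `z = 2 ^ (k / p) ≡ 1 [ZMOD p]`,
which is not divisible by `p ^ 2`. The estimates `Φ_{mp}(2) = Φ_m(2 ^ p) > 2 ^ p - 1` (when
`p ∣ m`) and `Φ_{bp}(2) 3 ^ φ(b) ≥ Φ_b(2 ^ p) ≥ (2 ^ p - 1) ^ φ(b) > (3p) ^ φ(b)` (when `p ∤ b`,
`p ≥ 5`) then contradict `Φ_k(2) = p`; the only case they miss, `a = 1`, `p = 3`, `b = 2`, is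
`k = 6`.
-/

open Polynomial Finset

namespace Polynomial

theorem cyclotomic_mul_dvd_geom_sum (R : Type*) [CommRing R] [IsDomain R] {m n : ℕ}
    (hm : 0 < m) (hn : 1 < n) : cyclotomic (m * n) R ∣ ∑ i ∈ range n, (X ^ m) ^ i := by
  have h := X_pow_sub_one_mul_cyclotomic_dvd_X_pow_sub_one_of_dvd R
    (Nat.mem_properDivisors.2 ⟨dvd_mul_right m n, lt_mul_right hm hn⟩)
  have hX : (X ^ m - 1 : R[X]) ≠ 0 := by simpa using X_pow_sub_C_ne_zero (R := R) hm 1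
  rw [pow_mul, ← geom_sum_mul (X ^ m) n, mul_comm (∑ _ ∈ _, _)] at h
  exact (mul_dvd_mul_iff_left hX).1 h

theorem isPrimitiveRoot_of_dvd_cyclotomic_prime_pow_mul_eval {p a b : ℕ} [Fact p.Prime]
    (hb : ¬p ∣ b) {x : ℤ} (h : (p : ℤ) ∣ (cyclotomic (p ^ a * b) ℤ).eval x) :
    IsPrimitiveRoot (x : ZMod p) b := by
  have : NeZero (b : ZMod p) := ⟨by rwa [Ne, ZMod.natCast_eq_zero_iff]⟩
  rw [← isRoot_cyclotomic_prime_pow_mul_iff_of_charP (k := a), IsRoot.def,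
    ← eq_intCast (Int.castRingHom (ZMod p)), cyclotomic.eval_apply,
    eq_intCast, ZMod.intCast_zmod_eq_zero_iff_dvd]
  exact h

theorem cast_cyclotomic_eval_two (n : ℕ) :
    (((cyclotomic n ℤ).eval 2 : ℤ) : ℝ) = (cyclotomic n ℝ).eval 2 := by
  simpa using (cyclotomic.eval_apply (2 : ℤ) n (Int.castRingHom ℝ)).symm

end Polynomial

theorem ZMod.dvd_sub_one_of_isPrimitiveRoot {p b : ℕ} [Fact p.Prime] {ζ : ZMod p}
    (h : IsPrimitiveRoot ζ b) (hb : b ≠ 0) : b ∣ p - 1 :=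
  h.eq_orderOf ▸ ZMod.orderOf_dvd_card_sub_one (h.ne_zero hb)

theorem ZMod.one_lt_of_isPrimitiveRoot_two {p b : ℕ} [Fact p.Prime]
    (h : IsPrimitiveRoot (2 : ZMod p) b) (hb : b ≠ 0) : 1 < b := by
  refine lt_of_le_of_ne (Nat.one_le_iff_ne_zero.2 hb) fun hb1 ↦ one_ne_zero (α := ZMod p) ?_
  have h21 : (2 : ZMod p) = 1 := IsPrimitiveRoot.one_right_iff.1 (hb1 ▸ h)
  linear_combination h21

theorem not_sq_dvd_geom_sum {p : ℕ} (hp : p.Prime) (hodd : Odd p) {z : ℤ}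
    (hz : (p : ℤ) ∣ z - 1) : ¬(p : ℤ) ^ 2 ∣ ∑ i ∈ range p, z ^ i := by
  have hp' : Prime (p : ℤ) := Nat.prime_iff_prime_int.1 hp
  have hpz : ¬(p : ℤ) ∣ z := fun h ↦ hp'.not_dvd_one (by simpa using dvd_sub h hz)
  have := emultiplicity_geom_sum₂_eq_one hp' hodd (by simpa using hz) hpz
  simp only [one_pow, mul_one] at this
  rw [pow_dvd_iff_le_emultiplicity, this]
  decide

theorem three_mul_add_one_lt_two_pow {n : ℕ} (hn : 5 ≤ n) : 3 * n + 1 < 2 ^ n := by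
  induction n, hn using Nat.le_induction with
  | base => norm_num
  | succ n _ ih => rw [pow_succ]; omega

section CyclotomicEvalTwo

variable {k p : ℕ}

theorem isPrimitiveRoot_two_ordCompl (hk : k ≠ 0) (hp : p.Prime)
    (h : (p : ℤ) ∣ (cyclotomic k ℤ).eval 2) : IsPrimitiveRoot (2 : ZMod p) (ordCompl[p] k) := by
  have : Fact p.Prime := ⟨hp⟩
  rw [← Nat.ordProj_mul_ordCompl_eq_self k p] at h
  simpa using isPrimitiveRoot_of_dvd_cyclotomic_prime_pow_mul_eval (Nat.not_dvd_ordCompl hp hk) h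

theorem one_lt_ordCompl_of_dvd_cyclotomic_eval_two (hk : k ≠ 0) (hp : p.Prime)
    (h : (p : ℤ) ∣ (cyclotomic k ℤ).eval 2) : 1 < ordCompl[p] k :=
  have : Fact p.Prime := ⟨hp⟩
  ZMod.one_lt_of_isPrimitiveRoot_two (isPrimitiveRoot_two_ordCompl hk hp h)
    (Nat.ordCompl_pos p hk).ne'

theorem ordCompl_dvd_sub_one_of_dvd_cyclotomic_eval_two (hk : k ≠ 0) (hp : p.Prime)
    (h : (p : ℤ) ∣ (cyclotomic k ℤ).eval 2) : ordCompl[p] k ∣ p - 1 :=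
  have : Fact p.Prime := ⟨hp⟩
  ZMod.dvd_sub_one_of_isPrimitiveRoot (isPrimitiveRoot_two_ordCompl hk hp h)
    (Nat.ordCompl_pos p hk).ne'

theorem three_le_of_dvd_cyclotomic_eval_two (hk : k ≠ 0) (hp : p.Prime)
    (h : (p : ℤ) ∣ (cyclotomic k ℤ).eval 2) : 3 ≤ p := by
  have hb := one_lt_ordCompl_of_dvd_cyclotomic_eval_two hk hp h
  have := Nat.le_of_dvd (by have := hp.two_le; omega)
    (ordCompl_dvd_sub_one_of_dvd_cyclotomic_eval_two hk hp h)
  omega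

theorem le_of_dvd_cyclotomic_eval_two {q : ℕ} (hk : k ≠ 0) (hp : p.Prime)
    (h : (p : ℤ) ∣ (cyclotomic k ℤ).eval 2) (hq : q.Prime) (hqk : q ∣ k) : q ≤ p := by
  rcases eq_or_ne q p with rfl | hqp
  · rfl
  have hqb : q ∣ ordCompl[p] k := Nat.dvd_ordCompl_of_dvd_not_dvd hqk
    fun hpq ↦ hqp ((Nat.prime_dvd_prime_iff_eq hp hq).1 hpq).symm
  have := Nat.le_of_dvd (by have := hp.two_le; omega)
    (hqb.trans (ordCompl_dvd_sub_one_of_dvd_cyclotomic_eval_two hk hp h))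
  omega

theorem not_sq_dvd_cyclotomic_eval_two (hk : k ≠ 0) (hp : p.Prime) (hpk : p ∣ k)
    (h : (p : ℤ) ∣ (cyclotomic k ℤ).eval 2) : ¬(p : ℤ) ^ 2 ∣ (cyclotomic k ℤ).eval 2 := by
  have hbk : ordCompl[p] k ∣ k / p := Nat.dvd_div_of_mul_dvd <|
    (Nat.coprime_ordCompl hp hk).mul_dvd_of_dvd_of_dvd hpk (Nat.ordCompl_dvd k p)
  have hz : (p : ℤ) ∣ 2 ^ (k / p) - 1 := by
    rw [← ZMod.intCast_zmod_eq_zero_iff_dvd]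
    obtain ⟨c, hc⟩ := hbk
    simp [hc, pow_mul, (isPrimitiveRoot_two_ordCompl hk hp h).pow_eq_one]
  have hdvd : (cyclotomic k ℤ).eval 2 ∣ ∑ i ∈ range p, ((2 : ℤ) ^ (k / p)) ^ i := by
    have := map_dvd (evalRingHom 2) (cyclotomic_mul_dvd_geom_sum ℤ
      (Nat.div_pos (Nat.le_of_dvd (Nat.pos_of_ne_zero hk) hpk) hp.pos) hp.one_lt)
    simpa [Nat.div_mul_cancel hpk, eval_finsetSum] using this
  have hodd : Odd p :=
    hp.odd_of_ne_two (by have := three_le_of_dvd_cyclotomic_eval_two hk hp h; omega)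
  exact fun hsq ↦ not_sq_dvd_geom_sum hp hodd hz (hsq.trans hdvd)

theorem prime_lt_cyclotomic_eval_two_of_sq_dvd (hk : k ≠ 0) (hp : p.Prime) (hpk : p ^ 2 ∣ k) :
    (p : ℤ) < (cyclotomic k ℤ).eval 2 := by
  obtain ⟨m, rfl⟩ := hpk
  have hm : m ≠ 0 := right_ne_zero_of_mul hk
  have hexp : (cyclotomic (p ^ 2 * m) ℤ).eval 2 =
      (cyclotomic (p * m) ℤ).eval ((2 ^ p : ℕ) : ℤ) := by
    rw [show p ^ 2 * m = p * m * p by ring,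
      ← cyclotomic_expand_eq_cyclotomic hp (dvd_mul_right p m), expand_eval]
    push_cast
    rfl
  have hbound := sub_one_pow_totient_lt_natAbs_cyclotomic_eval (n := p * m) (q := 2 ^ p)
    (one_lt_mul_of_lt_of_le hp.one_lt (Nat.one_le_iff_ne_zero.2 hm))
    (Nat.one_lt_two_pow hp.ne_zero).ne'
  have hp2 : p ≤ 2 ^ p - 1 := by have := Nat.lt_two_pow_self (n := p); omega
  have hpow : 2 ^ p - 1 ≤ (2 ^ p - 1) ^ (p * m).totient :=
    Nat.le_self_pow (Nat.totient_pos.2 (Nat.pos_of_ne_zero (mul_ne_zero hp.ne_zero hm))).ne' _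
  have hpos := cyclotomic_pos' (p ^ 2 * m) (by norm_num : (1 : ℤ) < 2)
  rw [hexp] at hpos ⊢
  omega

theorem prime_lt_cyclotomic_eval_two_mul {b : ℕ} (hp : p.Prime) (hp5 : 5 ≤ p) (hb : ¬p ∣ b) :
    (p : ℤ) < (cyclotomic (b * p) ℤ).eval 2 := by
  have hb0 : 0 < b.totient := Nat.totient_pos.2 (Nat.pos_of_ne_zero (by rintro rfl; simp at hb))
  have hexp : (cyclotomic b ℝ).eval (2 ^ p) =
      (cyclotomic (b * p) ℝ).eval 2 * (cyclotomic b ℝ).eval 2 := by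
    rw [← eval_mul, ← cyclotomic_expand_eq_cyclotomic_mul hp hb, expand_eval]
  have hlow := sub_one_pow_totient_le_cyclotomic_eval (one_lt_pow₀ one_lt_two hp.ne_zero) b
  have hupp := cyclotomic_eval_le_add_one_pow_totient (q := 2) one_lt_two b
  have h3p : (3 * p + 1 : ℝ) < 2 ^ p := by exact_mod_cast three_mul_add_one_lt_two_pow hp5
  have key : ((p : ℝ) * 3) ^ b.totient < (cyclotomic (b * p) ℝ).eval 2 * 3 ^ b.totient := by
    calc ((p : ℝ) * 3) ^ b.totient < (2 ^ p - 1) ^ b.totient :=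
          pow_lt_pow_left₀ (by linarith) (by positivity) hb0.ne'
      _ ≤ (cyclotomic (b * p) ℝ).eval 2 * (cyclotomic b ℝ).eval 2 := hexp ▸ hlow
      _ ≤ (cyclotomic (b * p) ℝ).eval 2 * 3 ^ b.totient := by
          norm_num at hupp
          gcongr
          exact cyclotomic_nonneg _ one_le_two
  rw [mul_pow, ← cast_cyclotomic_eval_two] at key
  have hpp : (p : ℝ) ≤ p ^ b.totient := le_self_pow₀ (by exact_mod_cast hp.one_lt.le) hb0.ne'
  exact_mod_cast hpp.trans_lt (lt_of_mul_lt_mul_right key (by positivity))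

theorem prime_lt_cyclotomic_eval_two (hk : k ≠ 0) (hk6 : k ≠ 6) (hp : p.Prime) (hpk : p ∣ k)
    (h : (p : ℤ) ∣ (cyclotomic k ℤ).eval 2) : (p : ℤ) < (cyclotomic k ℤ).eval 2 := by
  obtain ⟨m, rfl⟩ := hpk
  by_cases hpm : p ∣ m
  · exact prime_lt_cyclotomic_eval_two_of_sq_dvd hk hp (by rw [sq]; exact mul_dvd_mul_left p hpm)
  have hm : ordCompl[p] (p * m) = m := by
    simpa using Nat.ordCompl_pow_mul_of_not_dvd 1 hp hpm
  have hm1 := hm ▸ one_lt_ordCompl_of_dvd_cyclotomic_eval_two hk hp h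
  have hmp := hm ▸ ordCompl_dvd_sub_one_of_dvd_cyclotomic_eval_two hk hp h
  have hp3 : p ≠ 3 := by
    rintro rfl
    have := Nat.le_of_dvd two_pos hmp
    exact hk6 (by omega)
  have hp4 : p ≠ 4 := by rintro rfl; exact absurd hp (by decide)
  have := three_le_of_dvd_cyclotomic_eval_two hk hp h
  rw [mul_comm]
  exact prime_lt_cyclotomic_eval_two_mul hp (by omega) hpm

theorem cyclotomic_eval_two_le_prime (hk : k ≠ 0) (hp : p.Prime) (hpk : p ∣ k)
    (h : (p : ℤ) ∣ (cyclotomic k ℤ).eval 2)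
    (hall : ∀ q : ℕ, q.Prime → (q : ℤ) ∣ (cyclotomic k ℤ).eval 2 → q ∣ k) :
    (cyclotomic k ℤ).eval 2 ≤ p := by
  set N := (cyclotomic k ℤ).eval 2
  have hN : 0 < N := cyclotomic_pos' k one_lt_two
  have hpow := Nat.eq_prime_pow_of_unique_prime_dvd (p := p) (n := N.natAbs) (by omega)
    fun {q} hq hqN ↦ le_antisymm
      (le_of_dvd_cyclotomic_eval_two hk hp h hq (hall q hq (Int.natCast_dvd.2 hqN)))
      (le_of_dvd_cyclotomic_eval_two hk hq (Int.natCast_dvd.2 hqN) hp hpk)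
  set e := N.natAbs.primeFactorsList.length
  have he : e ≤ 1 := by
    by_contra! he
    refine not_sq_dvd_cyclotomic_eval_two hk hp hpk h ?_
    rw [← Nat.cast_pow, Int.natCast_dvd, hpow]
    exact pow_dvd_pow p he
  have : N.natAbs ≤ p := hpow ▸ (Nat.pow_le_pow_right hp.pos he).trans_eq (pow_one p)
  omega

theorem exists_prime_dvd_cyclotomic_eval_two_not_dvd (hk1 : 1 < k) (hk6 : k ≠ 6) :
    ∃ p : ℕ, p.Prime ∧ (p : ℤ) ∣ (cyclotomic k ℤ).eval 2 ∧ ¬p ∣ k := by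
  by_contra! hall
  have hN := sub_one_lt_natAbs_cyclotomic_eval hk1 (q := 2) (by norm_num)
  obtain ⟨p, hp, hpN⟩ := Nat.exists_prime_and_dvd (n := ((cyclotomic k ℤ).eval 2).natAbs)
    (by push_cast at hN; omega)
  rw [← Int.natCast_dvd] at hpN
  have hk : k ≠ 0 := by omega
  have hpk := hall p hp hpN
  exact (prime_lt_cyclotomic_eval_two hk hk6 hp hpk hpN).not_ge
    (cyclotomic_eval_two_le_prime hk hp hpk hpN hall)

end CyclotomicEvalTwo

theorem stmt5_general (k r : ℕ) (hk : 0 < k) (hk1 : k ≠ 1) (hk6 : k ≠ 6)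
    (hdvd : (Polynomial.cyclotomic k ℤ).eval 2 ∣ 2 ^ r - 1) :
    k ∣ r := by
  obtain ⟨p, hp, hpN, hpk⟩ := exists_prime_dvd_cyclotomic_eval_two_not_dvd (by omega) hk6
  have : Fact p.Prime := ⟨hp⟩
  have hprim : IsPrimitiveRoot (2 : ZMod p) k := by
    have := isPrimitiveRoot_of_dvd_cyclotomic_prime_pow_mul_eval (a := 0) hpk
      (by simpa using hpN)
    rwa [Int.cast_ofNat] at this
  refine hprim.dvd_of_pow_eq_one r ?_
  have h := (ZMod.intCast_zmod_eq_zero_iff_dvd _ p).2 (hpN.trans hdvd)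
  push_cast at h
  linear_combination h

/-- Let `k` be a positive integer with `k ≠ 1` and `k ≠ 6`, and let `r` be a
positive integer such that `Φ_k(2)` divides `2^r − 1`. Then `k` divides `r`. -/
theorem stmt5 (k r : ℕ) (hk : 0 < k) (hk1 : k ≠ 1) (hk6 : k ≠ 6) (hr : 0 < r)
    (hdvd : (Polynomial.cyclotomic k ℤ).eval 2 ∣ 2 ^ r - 1) :
    k ∣ r :=
  stmt5_general k r hk hk1 hk6 hdvd
end

section
/- For every odd integer k ≥ 3 and every divisor κ of k with κ > 1, the cyclotomic polynomial Φ_k is κ-LRS-degenerate; i.e., Φ_k has two distinct complex roots whose ratio is a primitive κ-th root of unity. -/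
/-!
If `ζ` is a primitive `k`-th root of unity and `k = m * κ`, then `ζ ^ a` and `ζ ^ (a + m)` are roots
of `Φ_k` as soon as `a` and `a + m` are coprime to `k`, and their ratio `ζ ^ m` is a primitive
`κ`-th root of unity. For odd `k` such an `a` exists: modulo each prime `p ∣ k` one only has to
avoid the two residues `0` and `-m`, which is possible because `p ≥ 3`.
-/

open Polynomial

/-- A nonzero polynomial `f ∈ ℂ[x]` is `k`-LRS-degenerate if it has two
distinct roots `α, β` such that `α/β` is a primitive `k`-th root of unity. -/
def IsLRSDegenerateOfOrder (f : Polynomial ℂ) (k : ℕ) : Prop :=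
  f ≠ 0 ∧ ∃ α β : ℂ, f.IsRoot α ∧ f.IsRoot β ∧ α ≠ β ∧ IsPrimitiveRoot (α / β) k

open Nat in
theorem Nat.exists_coprime_and_add_coprime_of_odd {n : ℕ} (hn : Odd n) (m : ℕ) :
    ∃ a : ℕ, a.Coprime n ∧ (a + m).Coprime n := by
  -- Modulo a prime `p ∣ n` this is `1` when `p ∣ m` and `m` otherwise (Fermat, as `p - 1 ∣ φ n`);
  -- `p` is odd, so then `a + m ≡ 2 * m` is nonzero too.
  set a := 1 + m ^ φ n * (m + n - 1)
  suffices key : ∀ p, p.Prime → p ∣ n → (a : ZMod p) ≠ 0 ∧ ((a + m : ℕ) : ZMod p) ≠ 0 by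
    refine ⟨a, Nat.coprime_of_dvd fun p hp hpa hpn => ?_, Nat.coprime_of_dvd fun p hp hpa hpn => ?_⟩
    · exact (key p hp hpn).1 ((ZMod.natCast_eq_zero_iff _ _).2 hpa)
    · exact (key p hp hpn).2 ((ZMod.natCast_eq_zero_iff _ _).2 hpa)
  intro p hp hpn
  have : Fact p.Prime := ⟨hp⟩
  have hn0 : (n : ZMod p) = 0 := (ZMod.natCast_eq_zero_iff _ _).2 hpn
  have hp2 : (2 : ZMod p) ≠ 0 := by
    intro h
    have h2p : p ∣ 2 := by exact_mod_cast (ZMod.natCast_eq_zero_iff 2 p).1 (by exact_mod_cast h)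
    exact hn.not_two_dvd_nat ((Nat.prime_dvd_prime_iff_eq hp Nat.prime_two).1 h2p ▸ hpn)
  have ha : (a : ZMod p) = 1 + (m : ZMod p) ^ φ n * (m - 1) := by
    simp [a, Nat.cast_sub (show 1 ≤ m + n by have := hn.pos; omega), hn0]
  by_cases hm : (m : ZMod p) = 0
  · have hφ : φ n ≠ 0 := (Nat.totient_pos.2 hn.pos).ne'
    simp [ha, hm, hφ]
  · have hpow : (m : ZMod p) ^ φ n = 1 := by
      obtain ⟨c, hc⟩ := (Nat.totient_prime hp) ▸ Nat.totient_dvd_of_dvd hpn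
      rw [hc, pow_mul, ZMod.pow_card_sub_one_eq_one hm, one_pow]
    have ha' : (a : ZMod p) = m := by rw [ha, hpow]; ring
    refine ⟨ha' ▸ hm, ?_⟩
    rw [Nat.cast_add, ha', ← two_mul]
    exact mul_ne_zero hp2 hm

theorem IsPrimitiveRoot.isLRSDegenerateOfOrder_cyclotomic {ζ : ℂ} {k m κ a : ℕ}
    (hζ : IsPrimitiveRoot ζ k) (hk : 0 < k) (hκ : 1 < κ) (hkm : k = m * κ)
    (ha : a.Coprime k) (ham : (a + m).Coprime k) :
    IsLRSDegenerateOfOrder (cyclotomic k ℂ) κ := by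
  have hratio : ζ ^ (a + m) / ζ ^ a = ζ ^ m := by
    rw [pow_add, mul_div_cancel_left₀ _ (pow_ne_zero _ (hζ.ne_zero hk.ne'))]
  have hprim : IsPrimitiveRoot (ζ ^ (a + m) / ζ ^ a) κ := hratio ▸ hζ.pow hk hkm
  refine ⟨cyclotomic_ne_zero k ℂ, ζ ^ (a + m), ζ ^ a, (hζ.pow_of_coprime _ ham).isRoot_cyclotomic hk,
    (hζ.pow_of_coprime _ ha).isRoot_cyclotomic hk, fun h => hprim.ne_one hκ ?_, hprim⟩
  rw [h, div_self (pow_ne_zero _ (hζ.ne_zero hk.ne'))]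

theorem stmt8_general (k : ℕ) (hodd : Odd k) (κ : ℕ) (hκ : 1 < κ) (hdvd : κ ∣ k) :
    IsLRSDegenerateOfOrder (Polynomial.cyclotomic k ℂ) κ := by
  obtain ⟨m, hkm⟩ := hdvd
  obtain ⟨a, ha, ham⟩ := Nat.exists_coprime_and_add_coprime_of_odd hodd m
  exact (Complex.isPrimitiveRoot_exp k hodd.pos.ne').isLRSDegenerateOfOrder_cyclotomic hodd.pos hκ
    (hkm.trans (mul_comm κ m)) ha ham

/-- For every odd `k ≥ 3` and every divisor `κ > 1` of `k`, the cyclotomic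
polynomial `Φ_k` is `κ`-LRS-degenerate. -/
theorem stmt8 (k : ℕ) (hk : 3 ≤ k) (hodd : Odd k) (κ : ℕ) (hκ : 1 < κ) (hdvd : κ ∣ k) :
    IsLRSDegenerateOfOrder (Polynomial.cyclotomic k ℂ) κ :=
  stmt8_general k hodd κ hκ hdvd
end

section
/- For every even integer k ≥ 4 and every divisor κ of k/2 with κ > 1, the cyclotomic polynomial Φ_k is κ-LRS-degenerate. -/
/-! If `k = d * κ` with `d` even and `ζ` is a primitive `k`-th root of unity, then for any `b`
with `b` and `b + d` both prime to `k`, the roots `ζ ^ (b + d)` and `ζ ^ b` of `Φ_k` have the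
primitive `κ`-th root of unity `ζ ^ d` as their ratio. Such a `b` exists by the Chinese remainder
theorem: modulo each prime `p ∣ k` only the residues `0` and `-d` are excluded, and these coincide
when `p = 2` because `d` is even. -/

open Polynomial

theorem Nat.exists_coprime_and_add_coprime_of_even {d n : ℕ} (hd : Even d) (hn : n ≠ 0) :
    ∃ b, Coprime b n ∧ Coprime (b + d) n := by
  classical
  -- modulo a prime `p ∣ 1 + d` (necessarily odd) take `b ≡ 2`, otherwise `b ≡ 1`
  let r : ℕ → ℕ := fun p => if p ∣ 1 + d then 2 else 1
  obtain ⟨b, hb⟩ := chineseRemainderOfFinset r id n.primeFactors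
    (fun p hp => (prime_of_mem_primeFactors hp).ne_zero)
    (fun p hp q hq hpq => (coprime_primes (prime_of_mem_primeFactors hp)
      (prime_of_mem_primeFactors hq)).2 hpq)
  have key : ∀ p, p.Prime → p ∣ n → ¬ p ∣ b ∧ ¬ p ∣ b + d := by
    intro p hp hpn
    have hbp : b ≡ r p [MOD p] := hb p (mem_primeFactors.2 ⟨hp, hpn, hn⟩)
    rw [hbp.dvd_iff dvd_rfl, (hbp.add_right d).dvd_iff dvd_rfl]
    have hp1 : ¬ p ∣ 1 := hp.not_dvd_one
    by_cases h : p ∣ 1 + d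
    · have hp2 : p ≠ 2 := by
        rintro rfl
        obtain ⟨m, rfl⟩ := hd
        omega
      simp only [r, if_pos h]
      refine ⟨fun h2 => hp2 ((prime_dvd_prime_iff_eq hp prime_two).1 h2), fun h2 => hp1 ((Nat.dvd_add_left h).1 (by rwa [← add_assoc]))⟩
    · simp only [r, if_neg h]
      exact ⟨hp1, h⟩
  exact ⟨b, coprime_of_dvd fun p hp hpb hpn => (key p hp hpn).1 hpb,
    coprime_of_dvd fun p hp hpb hpn => (key p hp hpn).2 hpb⟩

theorem isLRSDegenerateOfOrder_cyclotomic_mul {d κ : ℕ} (hd : Even d) (hd0 : d ≠ 0)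
    (hκ : 1 < κ) : IsLRSDegenerateOfOrder (cyclotomic (d * κ) ℂ) κ := by
  have hk : d * κ ≠ 0 := mul_ne_zero hd0 (by omega)
  obtain ⟨b, hb, hbd⟩ := Nat.exists_coprime_and_add_coprime_of_even hd hk
  have hζ := Complex.isPrimitiveRoot_exp (d * κ) hk
  set ζ := Complex.exp (2 * Real.pi * Complex.I / (d * κ : ℕ))
  have hratio : ζ ^ (b + d) / ζ ^ b = ζ ^ d := by
    rw [pow_add, mul_div_cancel_left₀ _ (pow_ne_zero _ (hζ.ne_zero hk))]
  have hprim : IsPrimitiveRoot (ζ ^ d) κ := hζ.pow (by omega) rfl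
  refine ⟨cyclotomic_ne_zero _ ℂ, ζ ^ (b + d), ζ ^ b,
    (hζ.pow_of_coprime _ hbd).isRoot_cyclotomic (by omega),
    (hζ.pow_of_coprime _ hb).isRoot_cyclotomic (by omega), fun h => ?_, hratio ▸ hprim⟩
  rw [h, div_self (pow_ne_zero _ (hζ.ne_zero hk))] at hratio
  exact hκ.ne' (hprim.eq_orderOf.trans (by rw [← hratio, orderOf_one]))

/-- For every even `k ≥ 4` and every divisor `κ > 1` of `k/2`, the cyclotomic
polynomial `Φ_k` is `κ`-LRS-degenerate. -/
theorem stmt9 (k : ℕ) (hk : 4 ≤ k) (heven : Even k) (κ : ℕ) (hκ : 1 < κ)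
    (hdvd : κ ∣ k / 2) :
    IsLRSDegenerateOfOrder (Polynomial.cyclotomic k ℂ) κ := by
  obtain ⟨s, rfl⟩ := heven
  obtain ⟨t, hs⟩ : κ ∣ s := by rwa [show (s + s) / 2 = s by omega] at hdvd
  subst hs
  have ht : t ≠ 0 := by rintro rfl; simp at hk
  rw [show κ * t + κ * t = 2 * t * κ by ring]
  exact isLRSDegenerateOfOrder_cyclotomic_mul (even_two_mul t) (by omega) hκ
end

section
/- Let f ∈ ℤ[x] be k-LRS-degenerate for some k ≥ 2, let F_q be a finite field containing a primitive k-th root of unity ζ, let ψ: ℤ[x] → F_q[x] be coefficientwise reduction, and set g = ψ(f). If deg(g) = deg(f), then gcd(g(x), g(ζx)) has degree at least 1 in F_q[x]. -/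
open Polynomial
open scoped Classical

/-- An integer polynomial `f` is `k`-LRS-degenerate if it has two distinct
complex roots `α, β` such that `α/β` is a primitive `k`-th root of unity. -/
def IsLRSDegenerateOfOrderZ (f : Polynomial ℤ) (k : ℕ) : Prop :=
  f ≠ 0 ∧ ∃ α β : ℂ, Polynomial.aeval α f = 0 ∧ Polynomial.aeval β f = 0 ∧
    α ≠ β ∧ IsPrimitiveRoot (α / β) k

/-!
Consider the resultant `D(T) = Res_X(f(X), f(TX)) ∈ ℤ[T]`, taken with both degrees equal to
`n = deg f`. Since `β` is a common root of `f(X)` and `f((α/β)X)`, `D` vanishes at the primitive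
`k`-th root of unity `α/β`; hence `Φ_k ∣ D` in `ℤ[T]` and so `D(ζ) = 0` in `F`. Specialising the
Sylvester matrix at `T = ζ` gives `Res_{n,n}(g(X), g(ζX))`, which is the resultant of `g(X)` and
`g(ζX)` because `deg g = n`; its vanishing means that `g(X)` and `g(ζX)` are not coprime.
-/

theorem IsPrimitiveRoot.aeval_eq_zero_of_aeval_eq_zero {K R : Type*} [Field K] [CharZero K]
    [CommRing R] [IsDomain R] {k : ℕ} (hk : 0 < k) {ω : K} {ζ : R}
    (hω : IsPrimitiveRoot ω k) (hζ : IsPrimitiveRoot ζ k) {P : ℤ[X]} (hP : aeval ω P = 0) :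
    aeval ζ P = 0 := by
  obtain ⟨Q, rfl⟩ : cyclotomic k ℤ ∣ P :=
    cyclotomic_eq_minpoly hω hk ▸ minpoly.isIntegrallyClosed_dvd (hω.isIntegral hk) hP
  rw [map_mul, aeval_def, eval₂_eq_eval_map, map_cyclotomic, (hζ.isRoot_cyclotomic hk).eq_zero,
    zero_mul]

namespace Polynomial

theorem natDegree_comp_C_mul_X {R : Type*} [CommRing R] [NoZeroDivisors R]
    (p : R[X]) {a : R} (ha : a ≠ 0) : (p.comp (C a * X)).natDegree = p.natDegree := by
  rw [natDegree_comp, natDegree_C_mul_X a ha, mul_one]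

theorem aeval_resultant_map_C_comp_C_mul_X {R A : Type*} [CommRing R] [CommRing A]
    [Algebra R A] (f : R[X]) (m n : ℕ) (t : A) :
    aeval t (resultant (f.map C) ((f.map C).comp (C X * X)) m n) =
      resultant (f.map (algebraMap R A)) ((f.map (algebraMap R A)).comp (C t * X)) m n := by
  rw [aeval_def, ← coe_eval₂RingHom, ← resultant_map_map, map_comp, map_map, Polynomial.map_mul,
    map_C, map_X, coe_eval₂RingHom, eval₂_X]
  congr <;> exact RingHom.ext fun r => eval₂_C _ _

theorem not_isCoprime_of_isRoot {K : Type*} [Field K] {p q : K[X]} {x : K}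
    (hp : p.IsRoot x) (hq : q.IsRoot x) : ¬ IsCoprime p q := by
  rintro ⟨a, b, hab⟩
  simpa [hp.eq_zero, hq.eq_zero] using congr_arg (eval x) hab

theorem resultant_comp_C_mul_X_eq_zero_iff {K : Type*} [Field K] {p : K[X]}
    (hp : p ≠ 0) {a : K} (ha : a ≠ 0) :
    resultant p (p.comp (C a * X)) p.natDegree p.natDegree = 0 ↔
      ¬ IsCoprime p (p.comp (C a * X)) := by
  have h := resultant_eq_zero_iff (f := p) (g := p.comp (C a * X))
  rw [natDegree_comp_C_mul_X p ha] at h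
  exact h.trans (and_iff_right (Or.inl hp))

theorem one_le_natDegree_gcd_of_not_isCoprime {K : Type*} [Field K] {p q : K[X]}
    (hp : p ≠ 0) (h : ¬ IsCoprime p q) : 1 ≤ (EuclideanDomain.gcd p q).natDegree := by
  by_contra! hd
  refine h (EuclideanDomain.gcd_isUnit_iff.1 ?_)
  rw [isUnit_iff_degree_eq_zero, degree_eq_natDegree, Nat.lt_one_iff.1 hd]
  · rfl
  · exact fun h0 => hp (EuclideanDomain.gcd_eq_zero_iff.1 h0).1

end Polynomial

theorem stmt13_general (f : Polynomial ℤ) (k : ℕ) (hk : 2 ≤ k)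
    (hf : IsLRSDegenerateOfOrderZ f k)
    (F : Type*) [Field F] (ζ : F) (hζ : IsPrimitiveRoot ζ k)
    (g : Polynomial F) (hg : g = f.map (Int.castRingHom F))
    (hdeg : g.natDegree = f.natDegree) :
    1 ≤ (EuclideanDomain.gcd g (g.comp (Polynomial.C ζ * Polynomial.X))).natDegree := by
  obtain ⟨hf0, α, β, hα, hβ, -, hω⟩ := hf
  have hk0 : 0 < k := by omega
  have hω0 : α / β ≠ 0 := hω.ne_zero hk0.ne'
  have hβ0 : β ≠ 0 := by rintro rfl; simp at hω0
  set fℂ : ℂ[X] := f.map (algebraMap ℤ ℂ)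
  have hfℂ0 : fℂ ≠ 0 := (Polynomial.map_ne_zero_iff (algebraMap ℤ ℂ).injective_int).2 hf0
  have hfℂdeg : fℂ.natDegree = f.natDegree :=
    natDegree_map_eq_of_injective (algebraMap ℤ ℂ).injective_int f
  have hg0 : g ≠ 0 := ne_zero_of_natDegree_gt
    (hdeg ▸ natDegree_pos_of_aeval_root hf0 hα fun x hx => by simpa using hx)
  have hresℂ : aeval (α / β) (resultant (f.map C) ((f.map C).comp (C X * X)) f.natDegree
      f.natDegree) = 0 := by
    rw [aeval_resultant_map_C_comp_C_mul_X, ← hfℂdeg, resultant_comp_C_mul_X_eq_zero_iff hfℂ0 hω0]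
    refine not_isCoprime_of_isRoot (x := β) ?_ ?_
    · simpa [fℂ, aeval_def, eval_map] using hβ
    · simpa [fℂ, aeval_def, eval_map, div_mul_cancel₀ α hβ0] using hα
  have hresF := hω.aeval_eq_zero_of_aeval_eq_zero hk0 hζ hresℂ
  rw [aeval_resultant_map_C_comp_C_mul_X, algebraMap_int_eq, ← hg, ← hdeg,
    resultant_comp_C_mul_X_eq_zero_iff hg0 (hζ.ne_zero hk0.ne')] at hresF
  exact one_le_natDegree_gcd_of_not_isCoprime hg0 hresF

/-- Let `f ∈ ℤ[x]` be `k`-LRS-degenerate (`k ≥ 2`), let `F_q` be a finite field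
containing a primitive `k`-th root of unity `ζ`, and let `g` be the
coefficientwise reduction of `f` to `F_q[x]`. If `deg g = deg f`, then
`gcd(g(x), g(ζx))` has degree at least `1`. -/
theorem stmt13 (f : Polynomial ℤ) (k : ℕ) (hk : 2 ≤ k)
    (hf : IsLRSDegenerateOfOrderZ f k)
    (F : Type*) [Field F] [Fintype F] (ζ : F) (hζ : IsPrimitiveRoot ζ k)
    (g : Polynomial F) (hg : g = f.map (Int.castRingHom F))
    (hdeg : g.natDegree = f.natDegree) :
    1 ≤ (EuclideanDomain.gcd g (g.comp (Polynomial.C ζ * Polynomial.X))).natDegree :=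
  stmt13_general f k hk hf F ζ hζ g hg hdeg
end
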